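/- Let H ≤ ℤ^d be a subgroup of finite index and let R ⊆ ℤ^d be a set of ℤ^d-Bohr recurrence. Then R ∩ H is a set of ℤ^d-Bohr recurrence; that is, (R ∩ H) ∩ V ≠ ∅ for every Bohr₀ set V ⊆ ℤ^d. -/

import Mathlib

open scoped BigOperators

noncomputable section

/-- Distance from a real number to the nearest integer. -/
def torusNorm (x : ℝ) : ℝ := |x - round x|

/-- A subset `V ⊆ ℤ^d` is a Bohr₀ set if there are `k ≥ 1`, vectors `α₁, …, α_k ∈ ℝ^d`
and `ε > 0` such that every `n ∈ ℤ^d` with `‖n·αⱼ‖_𝕋 < ε` for all `j` belongs to `V`. -/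
def IsBohr0 (d : ℕ) (V : Set (Fin d → ℤ)) : Prop :=
  ∃ k : ℕ, 1 ≤ k ∧ ∃ α : Fin k → Fin d → ℝ, ∃ ε : ℝ, 0 < ε ∧
    ∀ n : Fin d → ℤ, (∀ j : Fin k, torusNorm (∑ i, (n i : ℝ) * α j i) < ε) → n ∈ V

/-- `R ⊆ ℤ^d` is a set of `ℤ^d`-Bohr recurrence if it meets every Bohr₀ set. -/
def IsBohrRecurrence (d : ℕ) (R : Set (Fin d → ℤ)) : Prop :=
  ∀ V : Set (Fin d → ℤ), IsBohr0 d V → (R ∩ V).Nonempty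

/-! The finite-index subgroup `H` contains `m ℤ^d` for `m = [ℤ^d : H]`, and `m ℤ^d` is itself a
Bohr₀ set, cut out by the frequencies `eᵢ / m`: if `‖nᵢ / m‖_𝕋 < 1 / m` then `m ∣ nᵢ`.
Since Bohr₀ sets are closed under intersection, `R` meets `V ∩ m ℤ^d ⊆ V ∩ H` for every
Bohr₀ set `V`. -/

theorem dvd_of_torusNorm_div_lt {m : ℕ} (hm : 0 < m) {n : ℤ}
    (h : torusNorm ((n : ℝ) / m) < 1 / m) : (m : ℤ) ∣ n := by
  set r := round ((n : ℝ) / m)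
  have hmR : (0 : ℝ) < m := by exact_mod_cast hm
  have hdist : |((n - m * r : ℤ) : ℝ)| < 1 := by
    calc |((n - m * r : ℤ) : ℝ)| = m * |(n : ℝ) / m - r| := by
          rw [← abs_of_pos hmR, ← abs_mul, abs_of_pos hmR, mul_sub, mul_div_cancel₀ _ hmR.ne']
          push_cast; ring_nf
      _ < m * (1 / m) := mul_lt_mul_of_pos_left h hmR
      _ = 1 := mul_one_div_cancel hmR.ne'
  have hzero : n - m * r = 0 := Int.abs_lt_one_iff.mp (by exact_mod_cast hdist)
  exact ⟨r, by omega⟩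

theorem IsBohr0.inter {d : ℕ} {V W : Set (Fin d → ℤ)} (hV : IsBohr0 d V) (hW : IsBohr0 d W) :
    IsBohr0 d (V ∩ W) := by
  obtain ⟨k, hk, α, ε, hε, hαε⟩ := hV
  obtain ⟨l, -, β, δ, hδ, hβδ⟩ := hW
  refine ⟨k + l, by omega, Fin.append α β, min ε δ, lt_min hε hδ, fun n hn => ⟨?_, ?_⟩⟩
  · exact hαε n fun j => by
      simpa only [Fin.append_left] using (hn (Fin.castAdd l j)).trans_le (min_le_left ε δ)
  · exact hβδ n fun j => by
      simpa only [Fin.append_right] using (hn (Fin.natAdd k j)).trans_le (min_le_right ε δ)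

theorem isBohr0_setOf_forall_dvd (d : ℕ) {m : ℕ} (hm : 0 < m) :
    IsBohr0 d {n | ∀ i, (m : ℤ) ∣ n i} := by
  -- One spare zero frequency keeps `k ≥ 1` when `d = 0`.
  refine ⟨d + 1, by omega, fun j i => if (i : ℕ) = j then 1 / (m : ℝ) else 0, 1 / m,
    by positivity, fun n hn i => dvd_of_torusNorm_div_lt hm ?_⟩
  have hsum : (∑ i', (n i' : ℝ) * if (i' : ℕ) = (i.castSucc : Fin (d + 1)) then 1 / (m : ℝ)
      else 0) = (n i : ℝ) / m := by
    rw [Finset.sum_eq_single i (fun i' _ hi' => by simp [Fin.val_ne_of_ne hi'])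
      (fun hi => absurd (Finset.mem_univ i) hi)]
    simp [div_eq_mul_inv]
  simpa only [hsum] using hn i.castSucc

theorem AddSubgroup.mem_of_forall_index_dvd {ι : Type*} (H : AddSubgroup (ι → ℤ))
    {n : ι → ℤ} (hn : ∀ i, (H.index : ℤ) ∣ n i) : n ∈ H := by
  have hn_eq : n = H.index • fun i => n i / H.index := by
    funext i
    simp only [Pi.smul_apply, nsmul_eq_mul]
    exact (Int.mul_ediv_cancel' (hn i)).symm
  rw [hn_eq]
  exact H.nsmul_index_mem _

/-- For a finite-index subgroup `H ≤ ℤ^d`, the intersection of a set of `ℤ^d`-Bohr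
recurrence with `H` is again a set of `ℤ^d`-Bohr recurrence. -/
theorem bohr_recurrence_inter_finite_index_subgroup
    (d : ℕ) (H : AddSubgroup (Fin d → ℤ)) (hH : H.FiniteIndex)
    (R : Set (Fin d → ℤ)) (hR : IsBohrRecurrence d R) :
    IsBohrRecurrence d (R ∩ (H : Set (Fin d → ℤ))) := by
  intro V hV
  obtain ⟨n, hnR, hnV, hn_dvd⟩ :=
    hR _ (hV.inter (isBohr0_setOf_forall_dvd d (Nat.pos_of_ne_zero hH.index_ne_zero)))
  exact ⟨n, ⟨hnR, H.mem_of_forall_index_dvd hn_dvd⟩, hnV⟩
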